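/- arXiv:2201.00528 — 3 statements merged into one kernel-verified Lean document; each statement's English description precedes it below -/
import Mathlib

section
/- The alternative limit definition of the Schwarzian cocycle holds: for φ holomorphic with φ'(w) ≠ 0, 6·lim_{z→w} ∂²/∂z∂w [log((φ(z)-φ(w))/(z-w))] = {φ(w),w}_2, i.e. the mixed second derivative of log of the difference quotient tends to one sixth of the Schwarzian derivative. -/
/-!
The branch `L` enters only through its derivatives, which are forced by
`exp L = (φ z - φ w)/(z - w)`: differentiating in `w` gives
`∂_w L = 1/(z - w) - φ'(w)/(φ z - φ w)`, and then differentiating in `z` gives the kernel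
`∂_z ∂_w L = φ'(z) φ'(w)/(φ z - φ w)² - 1/(z - w)²`.
Expanding `φ` to third order and `φ'` to second order at `w`, with analytic remainders given by
iterated `dslope`s, the double poles of the kernel cancel, leaving a function continuous at `w`
whose value there is `{φ, w}/6`.
-/

open Complex Filter Function Topology

section Taylor

variable {𝕜 E : Type*} [NontriviallyNormedField 𝕜] [NormedAddCommGroup E] [NormedSpace 𝕜 E]

theorem eq_sum_add_pow_smul_iterate_dslope (f : 𝕜 → E) (c z : 𝕜) (n : ℕ) :
    f z = ∑ k ∈ Finset.range n, (z - c) ^ k • (swap dslope c)^[k] f c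
      + (z - c) ^ n • (swap dslope c)^[n] f z := by
  induction n with
  | zero => simp
  | succ n ih =>
    rw [ih, Finset.sum_range_succ, iterate_succ_apply', swap, pow_succ, mul_smul,
      sub_smul_dslope, smul_sub]
    abel

theorem AnalyticAt.iterate_dslope {f : 𝕜 → E} {c : 𝕜} (hf : AnalyticAt 𝕜 f c) (n : ℕ) :
    AnalyticAt 𝕜 ((swap dslope c)^[n] f) c :=
  let ⟨_, hp⟩ := hf
  ⟨_, hp.has_fpower_series_iterate_dslope_fslope n⟩

theorem AnalyticAt.iterate_dslope_self [CompleteSpace E] [CharZero 𝕜] {f : 𝕜 → E} {c : 𝕜}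
    (hf : AnalyticAt 𝕜 f c) (n : ℕ) :
    (swap dslope c)^[n] f c = (n.factorial : 𝕜)⁻¹ • iteratedDeriv n f c := by
  obtain ⟨p, r, hp⟩ := hf
  rw [← (hp.hasFPowerSeriesAt.has_fpower_series_iterate_dslope_fslope n).coeff_zero 1,
    iteratedDeriv_eq_iteratedFDeriv, ← hp.factorial_smul, ← Nat.cast_smul_eq_nsmul 𝕜,
    smul_smul, inv_mul_cancel₀ (by exact_mod_cast n.factorial_ne_zero), one_smul]
  exact (p.coeff_iterate_fslope n 0).trans (congrArg p.coeff (zero_add n))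

theorem AnalyticAt.exists_taylor_remainder [CompleteSpace E] [CharZero 𝕜] {f : 𝕜 → E}
    {c : 𝕜} (hf : AnalyticAt 𝕜 f c) (n : ℕ) :
    ∃ R : 𝕜 → E, AnalyticAt 𝕜 R c ∧ R c = (n.factorial : 𝕜)⁻¹ • iteratedDeriv n f c ∧
      ∀ z, f z = ∑ k ∈ Finset.range n,
          (z - c) ^ k • (k.factorial : 𝕜)⁻¹ • iteratedDeriv k f c + (z - c) ^ n • R z := by
  refine ⟨_, hf.iterate_dslope n, hf.iterate_dslope_self n, fun z => ?_⟩
  simp only [← hf.iterate_dslope_self]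
  exact eq_sum_add_pow_smul_iterate_dslope f c z n

end Taylor

section Schwarzian

variable {𝕜 : Type*} [NontriviallyNormedField 𝕜]

noncomputable def schwarzian (f : 𝕜 → 𝕜) (c : 𝕜) : 𝕜 :=
  iteratedDeriv 3 f c / deriv f c - 3 / 2 * (iteratedDeriv 2 f c / deriv f c) ^ 2

theorem schwarzian_eq_of_hasDerivAt {f f' f'' f''' : 𝕜 → 𝕜} {c : 𝕜}
    (hf : ∀ᶠ z in 𝓝 c, HasDerivAt f (f' z) z) (hf' : ∀ᶠ z in 𝓝 c, HasDerivAt f' (f'' z) z)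
    (hf'' : HasDerivAt f'' (f''' c) c) :
    schwarzian f c = f''' c / f' c - 3 / 2 * (f'' c / f' c) ^ 2 := by
  have h1 : deriv f =ᶠ[𝓝 c] f' := hf.mono fun z hz => hz.deriv
  have h2 : deriv f' =ᶠ[𝓝 c] f'' := hf'.mono fun z hz => hz.deriv
  simp only [schwarzian, iteratedDeriv_succ', h1.iteratedDeriv_eq, h2.iteratedDeriv_eq,
    iteratedDeriv_zero, hf''.deriv, h1.eq_of_nhds]

theorem AnalyticAt.tendsto_deriv_mul_deriv_div_sub_sq_sub_inv_sq [CompleteSpace 𝕜]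
    [CharZero 𝕜] {f : 𝕜 → 𝕜} {c : 𝕜} (hf : AnalyticAt 𝕜 f c) (hc : deriv f c ≠ 0) :
    Tendsto (fun z => deriv f z * deriv f c / (f z - f c) ^ 2 - 1 / (z - c) ^ 2) (𝓝[≠] c)
      (𝓝 (schwarzian f c / 6)) := by
  obtain ⟨R, hR, hRc, hf_taylor⟩ := hf.exists_taylor_remainder 3
  obtain ⟨S, hS, hSc, hf'_taylor⟩ := hf.deriv.exists_taylor_remainder 2
  simp only [Finset.sum_range_succ, Finset.sum_range_zero, ← iteratedDeriv_succ',
    iteratedDeriv_zero, iteratedDeriv_one, Nat.factorial, smul_eq_mul]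
    at hRc hSc hf_taylor hf'_taylor
  norm_num at hRc hSc hf_taylor hf'_taylor
  set E : 𝕜 → 𝕜 := fun z => deriv f c + (z - c) * (iteratedDeriv 2 f c / 2 + (z - c) * R z)
    with hE_def
  have hE : ContinuousAt E c := by have := hR.continuousAt; fun_prop
  have hEc : E c ≠ 0 := by simpa [E] using hc
  have hf_sub : ∀ z, f z - f c = (z - c) * E z := fun z => by rw [hf_taylor z, hE_def]; ring
  -- the double poles cancel: off `c`, the kernel equals `G`
  set G : 𝕜 → 𝕜 := fun z => (deriv f c * S z - 2 * deriv f c * R z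
      - (iteratedDeriv 2 f c / 2) ^ 2 - (z - c) * (iteratedDeriv 2 f c * R z + (z - c) * R z ^ 2))
      / E z ^ 2 with hG_def
  have hG : ContinuousAt G c := by
    have := hR.continuousAt; have := hS.continuousAt
    exact ContinuousAt.div (by fun_prop) (hE.pow 2) (pow_ne_zero 2 hEc)
  have hGc : G c = schwarzian f c / 6 := by
    simp only [G, E, schwarzian, hRc, hSc, sub_self, zero_mul, add_zero, sub_zero]
    field_simp
    ring
  refine (hGc ▸ hG.tendsto.mono_left nhdsWithin_le_nhds).congr' ?_
  filter_upwards [self_mem_nhdsWithin, nhdsWithin_le_nhds (hE.eventually_ne hEc)] with z hz hEz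
  have hzc : z - c ≠ 0 := sub_ne_zero.2 hz
  rw [hf'_taylor z, hf_sub z, hG_def]
  field_simp
  rw [hE_def]
  ring

end Schwarzian

theorem HasDerivAt.eq_div_of_cexp_eventuallyEq {L F : ℂ → ℂ} {l F' w : ℂ}
    (hL : HasDerivAt L l w) (hF : HasDerivAt F F' w) (hexp : ∀ᶠ x in 𝓝 w, cexp (L x) = F x) :
    l = F' / F w := by
  have hF' : F' = cexp (L w) * l :=
    hF.unique (hL.cexp.congr_of_eventuallyEq (hexp.mono fun _ => Eq.symm))
  rw [hF', ← hexp.self_of_nhds, mul_div_cancel_left₀ _ (exp_ne_zero _)]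

section DiffQuot

variable {U : Set ℂ} {φ φ' : ℂ → ℂ} {L Lw M : ℂ → ℂ → ℂ}

theorem log_diffQuot_deriv_right_eq (hU : IsOpen U) (hφ : ∀ z ∈ U, HasDerivAt φ (φ' z) z)
    (hL : ∀ z ∈ U, ∀ w ∈ U, z ≠ w → cexp (L z w) = (φ z - φ w) / (z - w))
    (hLw : ∀ z ∈ U, ∀ w ∈ U, z ≠ w → HasDerivAt (fun w' => L z w') (Lw z w) w)
    {z w : ℂ} (hz : z ∈ U) (hw : w ∈ U) (hzw : z ≠ w) :
    Lw z w = 1 / (z - w) - φ' w / (φ z - φ w) := by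
  have hquot : HasDerivAt (fun w' => (φ z - φ w') / (z - w'))
      ((-φ' w * (z - w) - (φ z - φ w) * -1) / (z - w) ^ 2) w :=
    ((hφ w hw).const_sub _).div ((hasDerivAt_id w).const_sub z) (sub_ne_zero.2 hzw)
  have hexp : ∀ᶠ w' in 𝓝 w, cexp (L z w') = (φ z - φ w') / (z - w') := by
    filter_upwards [(hU.inter isOpen_compl_singleton).mem_nhds ⟨hw, hzw.symm⟩] with w' hw'
    exact hL z hz w' hw'.1 (Ne.symm hw'.2)
  have hφzw : φ z - φ w ≠ 0 := (div_ne_zero_iff.1 (hL z hz w hw hzw ▸ exp_ne_zero _)).1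
  rw [(hLw z hz w hw hzw).eq_div_of_cexp_eventuallyEq hquot hexp]
  field_simp [sub_ne_zero.2 hzw]
  ring

theorem log_diffQuot_mixed_deriv_eq (hU : IsOpen U) (hφ : ∀ z ∈ U, HasDerivAt φ (φ' z) z)
    (hL : ∀ z ∈ U, ∀ w ∈ U, z ≠ w → cexp (L z w) = (φ z - φ w) / (z - w))
    (hLw : ∀ z ∈ U, ∀ w ∈ U, z ≠ w → HasDerivAt (fun w' => L z w') (Lw z w) w)
    (hM : ∀ z ∈ U, ∀ w ∈ U, z ≠ w → HasDerivAt (fun z' => Lw z' w) (M z w) z)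
    {z w : ℂ} (hz : z ∈ U) (hw : w ∈ U) (hzw : z ≠ w) :
    M z w = φ' z * φ' w / (φ z - φ w) ^ 2 - 1 / (z - w) ^ 2 := by
  have hφzw : φ z - φ w ≠ 0 := (div_ne_zero_iff.1 (hL z hz w hw hzw ▸ exp_ne_zero _)).1
  have hformula : HasDerivAt (fun z' => 1 / (z' - w) - φ' w / (φ z' - φ w))
      ((0 * (z - w) - 1 * 1) / (z - w) ^ 2
        - (0 * (φ z - φ w) - φ' w * φ' z) / (φ z - φ w) ^ 2) z :=
    ((hasDerivAt_const z 1).div ((hasDerivAt_id z).sub_const w) (sub_ne_zero.2 hzw)).sub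
      ((hasDerivAt_const z (φ' w)).div ((hφ z hz).sub_const _) hφzw)
  have hLw_eq :
      (fun z' => Lw z' w) =ᶠ[𝓝 z] fun z' => 1 / (z' - w) - φ' w / (φ z' - φ w) := by
    filter_upwards [(hU.inter isOpen_compl_singleton).mem_nhds ⟨hz, hzw⟩] with z' hz'
    exact log_diffQuot_deriv_right_eq hU hφ hL hLw hz'.1 hw hz'.2
  rw [(hM z hz w hw hzw).unique (hformula.congr_of_eventuallyEq hLw_eq)]
  ring

end DiffQuot

/-- Alternative limit definition of the Schwarzian cocycle:
if L(z,w) is a holomorphic branch of log((φ(z)-φ(w))/(z-w)) near the diagonal,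
with Lw = ∂L/∂w and M = ∂²L/∂z∂w, then
6·lim_{z→w₀} M(z,w₀) = {φ,w₀}₂ = φ'''/φ' - (3/2)(φ''/φ')² at w₀. -/
theorem schwarzian_as_limit_of_mixed_derivative
    (U : Set ℂ) (hU : IsOpen U) (w₀ : ℂ) (hw₀ : w₀ ∈ U)
    (φ φ' φ'' φ''' : ℂ → ℂ) (L Lw M : ℂ → ℂ → ℂ)
    (hφ : ∀ z ∈ U, HasDerivAt φ (φ' z) z)
    (hφ' : ∀ z ∈ U, HasDerivAt φ' (φ'' z) z)
    (hφ'' : ∀ z ∈ U, HasDerivAt φ'' (φ''' z) z)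
    (hne : ∀ z ∈ U, φ' z ≠ 0)
    (hL : ∀ z ∈ U, ∀ w ∈ U, z ≠ w →
      Complex.exp (L z w) = (φ z - φ w) / (z - w))
    (hLw : ∀ z ∈ U, ∀ w ∈ U, z ≠ w →
      HasDerivAt (fun w' => L z w') (Lw z w) w)
    (hM : ∀ z ∈ U, ∀ w ∈ U, z ≠ w →
      HasDerivAt (fun z' => Lw z' w) (M z w) z) :
    Tendsto (fun z => 6 * M z w₀) (𝓝[≠] w₀)
      (𝓝 (φ''' w₀ / φ' w₀ - (3/2) * (φ'' w₀ / φ' w₀) ^ 2)) := by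
  have hUw₀ : U ∈ 𝓝 w₀ := hU.mem_nhds hw₀
  have hφ_an : AnalyticAt ℂ φ w₀ := DifferentiableOn.analyticAt
    (fun z hz => (hφ z hz).differentiableAt.differentiableWithinAt) hUw₀
  have hderiv : deriv φ =ᶠ[𝓝 w₀] φ' := eventually_of_mem hUw₀ fun z hz => (hφ z hz).deriv
  have hkernel : (fun z => deriv φ z * deriv φ w₀ / (φ z - φ w₀) ^ 2 - 1 / (z - w₀) ^ 2)
      =ᶠ[𝓝[≠] w₀] fun z => M z w₀ := by
    filter_upwards [self_mem_nhdsWithin, nhdsWithin_le_nhds (hderiv.and hUw₀)]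
      with z hzw₀ ⟨hz', hz⟩
    rw [hz', hderiv.eq_of_nhds, log_diffQuot_mixed_deriv_eq hU hφ hL hLw hM hz hw₀ hzw₀]
  have hlim := ((hφ_an.tendsto_deriv_mul_deriv_div_sub_sq_sub_inv_sq
    (hderiv.eq_of_nhds ▸ hne w₀ hw₀)).congr' hkernel).const_mul 6
  rwa [mul_div_cancel₀ _ (by norm_num), schwarzian_eq_of_hasDerivAt
    (eventually_of_mem hUw₀ hφ) (eventually_of_mem hUw₀ hφ') (hφ'' w₀ hw₀)] at hlim
end

section
/- The alternative limit definition of the affine cocycle holds: for φ holomorphic with φ'(w) ≠ 0, 2·lim_{z→w} ∂/∂z [log((φ(z)-φ(w))/(z-w))] = {φ(w),w}_1 = φ''(w)/φ'(w). -/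
open Complex Filter Topology

/-!
Write `φ z = φ w₀ + (z - w₀) * h z` with `h = dslope φ w₀`, which is holomorphic at `w₀` by the
removable singularity theorem and satisfies `h w₀ = φ' w₀`. Differentiating this identity twice
at `w₀` gives `φ'' w₀ = 2 * h' w₀`. Away from `w₀` we have `exp ∘ L = h`, so `L' = h' / h`, which
is continuous at `w₀` because `h w₀ ≠ 0`; hence `2 * L'` tends to `2 * h' w₀ / h w₀ = φ'' w₀ / φ' w₀`.
-/

section DSlope

variable {𝕜 E : Type*} [NontriviallyNormedField 𝕜] [NormedAddCommGroup E] [NormedSpace 𝕜 E]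
  {f : 𝕜 → E} {a b : 𝕜}

theorem hasDerivAt_of_differentiableAt_dslope (hd : DifferentiableAt 𝕜 (dslope f a) b) :
    HasDerivAt f (dslope f a b + (b - a) • deriv (dslope f a) b) b := by
  have hf : f = fun y => f a + (y - a) • dslope f a y := by
    ext y; rw [sub_smul_dslope, add_sub_cancel]
  rw [hf]
  simpa [add_comm] using ((hasDerivAt_id b).sub_const a).fun_smul hd.hasDerivAt |>.const_add (f a)

theorem hasDerivAt_add_sub_smul_deriv {h : 𝕜 → E} (hh : DifferentiableAt 𝕜 h a)
    (hh' : DifferentiableAt 𝕜 (deriv h) a) :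
    HasDerivAt (fun z => h z + (z - a) • deriv h z) ((2 : 𝕜) • deriv h a) a := by
  simpa [two_smul] using
    hh.hasDerivAt.fun_add (((hasDerivAt_id a).sub_const a).fun_smul hh'.hasDerivAt)

theorem eq_two_smul_deriv_dslope_of_hasDerivAt {f' : 𝕜 → E} {f'' : E}
    (hf : ∀ᶠ z in 𝓝 a, HasDerivAt f (f' z) z) (hf' : HasDerivAt f' f'' a)
    (hh : ∀ᶠ z in 𝓝 a, DifferentiableAt 𝕜 (dslope f a) z)
    (hh' : DifferentiableAt 𝕜 (deriv (dslope f a)) a) :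
    f'' = (2 : 𝕜) • deriv (dslope f a) a := by
  have hf'_eq : f' =ᶠ[𝓝 a] fun z => dslope f a z + (z - a) • deriv (dslope f a) z := by
    filter_upwards [hf, hh] with z hfz hhz
    exact hfz.unique (hasDerivAt_of_differentiableAt_dslope hhz)
  exact hf'.unique <|
    (hasDerivAt_add_sub_smul_deriv hh.self_of_nhds hh').congr_of_eventuallyEq hf'_eq

end DSlope

theorem analyticAt_dslope_of_differentiableOn {E : Type*} [NormedAddCommGroup E]
    [NormedSpace ℂ E] [CompleteSpace E] {f : ℂ → E} {U : Set ℂ} {a : ℂ} (hU : U ∈ 𝓝 a)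
    (hf : DifferentiableOn ℂ f U) : AnalyticAt ℂ (dslope f a) a :=
  ((differentiableOn_dslope hU).2 hf).analyticAt hU

theorem logDeriv_cexp_of_hasDerivAt {L : ℂ → ℂ} {L' z : ℂ} (hL : HasDerivAt L L' z) :
    logDeriv (fun y => cexp (L y)) z = L' := by
  rw [logDeriv_apply, hL.cexp.deriv, mul_div_cancel_left₀ _ (exp_ne_zero _)]

/-- Alternative limit definition of the affine cocycle: if L is a
holomorphic branch of log((φ(z)-φ(w₀))/(z-w₀)) near w₀ (with derivative L'), then
2·lim_{z→w₀} L'(z) = {φ,w₀}₁ = φ''(w₀)/φ'(w₀). -/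
theorem affine_cocycle_as_limit
    (U : Set ℂ) (hU : IsOpen U) (w₀ : ℂ) (hw₀ : w₀ ∈ U)
    (φ φ' φ'' L L' : ℂ → ℂ)
    (hφ : ∀ z ∈ U, HasDerivAt φ (φ' z) z)
    (hφ' : ∀ z ∈ U, HasDerivAt φ' (φ'' z) z)
    (hne : φ' w₀ ≠ 0)
    (hL : ∀ z ∈ U, z ≠ w₀ →
      Complex.exp (L z) = (φ z - φ w₀) / (z - w₀))
    (hLd : ∀ z ∈ U, z ≠ w₀ → HasDerivAt L (L' z) z) :
    Tendsto (fun z => 2 * L' z) (𝓝[≠] w₀) (𝓝 (φ'' w₀ / φ' w₀)) := by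
  have hUn : U ∈ 𝓝 w₀ := hU.mem_nhds hw₀
  have hUne : ∀ᶠ z in 𝓝[≠] w₀, z ∈ U ∧ z ≠ w₀ :=
    Eventually.and (nhdsWithin_le_nhds hUn) self_mem_nhdsWithin
  set h := dslope φ w₀
  have hh : AnalyticAt ℂ h w₀ :=
    analyticAt_dslope_of_differentiableOn hUn fun z hz =>
      (hφ z hz).differentiableAt.differentiableWithinAt
  have hh₀ : h w₀ = φ' w₀ := by rw [← (hφ w₀ hw₀).deriv]; exact dslope_same φ w₀
  have hφ'' : φ'' w₀ = 2 * deriv h w₀ :=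
    eq_two_smul_deriv_dslope_of_hasDerivAt (eventually_of_mem hUn hφ) (hφ' w₀ hw₀)
      (hh.eventually_analyticAt.mono fun _ hz => hz.differentiableAt) hh.deriv.differentiableAt
  have hexp : (fun z => exp (L z)) =ᶠ[𝓝[≠] w₀] h := hUne.mono fun z ⟨hz, hzw⟩ => by
    simp only [h, hL z hz hzw, dslope_of_ne _ hzw, slope_def_field]
  have hL' : ∀ᶠ z in 𝓝[≠] w₀, 2 * logDeriv h z = 2 * L' z := by
    filter_upwards [logDeriv_congr_nhdsNE hexp, hUne] with z hz ⟨hzU, hzw⟩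
    rw [← hz, logDeriv_cexp_of_hasDerivAt (hLd z hzU hzw)]
  have hlim : Tendsto (fun z => 2 * logDeriv h z) (𝓝 w₀) (𝓝 (2 * (deriv h w₀ / h w₀))) :=
    tendsto_const_nhds.mul (hh.deriv.continuousAt.div hh.continuousAt (hh₀ ▸ hne))
  rw [hφ'', ← hh₀, mul_div_assoc]
  exact (hlim.mono_left nhdsWithin_le_nhds).congr' hL'
end

section
/- If a double differential has local forms F(z)dz·dw = dz·dw/(z-w)² - 2c₂(w)dz·dw + O(z-w) and transforms as F̃(φ(z))·φ'(z)·φ'(w) = F(z) with F̃(z̃) = 1/(z̃-w̃)² - 2c̃₂(w̃) + O(z̃-w̃), then 2c̃₂(w̃)·(φ'(w))² = 2c₂(w) + (1/6){w̃,w}_2, i.e. c₂ transforms as a projective connection. -/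
open Complex Filter Topology Asymptotics

/-! Both sides are the limit as `z → w`, `z ≠ w`, of `φ'(w) φ'(z) / (φ z - φ w)² - 1 / (z - w)²`.
By the transformation law this quantity equals
`(F z - 1/(z-w)²) - φ'(w) φ'(z) (F̃ (φ z) - 1/(φ z - φ w)²)`, which tends to
`2 c̃₂ φ'(w)² - 2 c₂`. On the other hand, Taylor expansion of `φ` to third order at `w` gives
`φ'(w) φ'(z) (z-w)² - (φ z - φ w)² = (a c - b²) (z-w)⁴ + O((z-w)⁵)` with `a = φ'(w)`,
`b = φ''(w)/2`, `c = φ'''(w)/6`; dividing by `(z-w)² (φ z - φ w)² ~ a² (z-w)⁴` gives the limit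
`(a c - b²)/a² = {w̃,w}₂/6`. -/

section Taylor

variable {𝕜 E : Type*} [NontriviallyNormedField 𝕜] [NormedAddCommGroup E] [NormedSpace 𝕜 E]
  {f : 𝕜 → E} {x : 𝕜}

theorem iteratedDeriv_succ_eq_of_eventually_hasDerivAt {f' : 𝕜 → E}
    (h : ∀ᶠ z in 𝓝 x, HasDerivAt f (f' z) z) (n : ℕ) :
    iteratedDeriv (n + 1) f x = iteratedDeriv n f' x := by
  rw [iteratedDeriv_succ']
  exact Filter.EventuallyEq.iteratedDeriv_eq n (h.mono fun _ hz => hz.deriv)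

variable [CharZero 𝕜] [CompleteSpace E]

open Nat in
theorem HasFPowerSeriesAt.coeff_eq_inv_factorial_smul_iteratedDeriv
    {p : FormalMultilinearSeries 𝕜 𝕜 E} (hp : HasFPowerSeriesAt f p x) (n : ℕ) :
    p.coeff n = (n ! : 𝕜)⁻¹ • iteratedDeriv n f x := by
  obtain ⟨r, hr⟩ := hp
  rw [iteratedDeriv_eq_iteratedFDeriv, ← hr.factorial_smul 1 n, ← Nat.cast_smul_eq_nsmul 𝕜,
    smul_smul, inv_mul_cancel₀ (by exact_mod_cast n.factorial_ne_zero), one_smul]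
  rfl

open Nat in
theorem AnalyticAt.isBigO_sub_taylor (hf : AnalyticAt 𝕜 f x) (n : ℕ) :
    (fun z => f z - ∑ i ∈ Finset.range n, ((i ! : 𝕜)⁻¹ * (z - x) ^ i) • iteratedDeriv i f x)
      =O[𝓝 x] fun z => (z - x) ^ n := by
  obtain ⟨p, hp⟩ := hf
  have hsum : ∀ y, p.partialSum n y
      = ∑ i ∈ Finset.range n, ((i ! : 𝕜)⁻¹ * y ^ i) • iteratedDeriv i f x := fun y =>
    Finset.sum_congr rfl fun i _ => by
      rw [FormalMultilinearSeries.apply_eq_pow_smul_coeff,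
        hp.coeff_eq_inv_factorial_smul_iteratedDeriv, smul_smul, mul_comm]
  have h0 : (fun y => f (x + y) - p.partialSum n y) =O[𝓝 0] fun y => y ^ n :=
    (hp.isBigO_sub_partialSum_pow n).trans
      (by simpa using (isBigO_refl (fun y : 𝕜 => y ^ n) _).norm_left)
  have hshift : Tendsto (fun z => z - x) (𝓝 x) (𝓝 0) := tendsto_sub_nhds_zero_iff.2 tendsto_id
  simpa [hsum, Function.comp_def] using h0.comp_tendsto hshift

end Taylor

section ComplexTaylor

variable {f f' f'' f''' : ℂ → ℂ} {w : ℂ}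

theorem analyticAt_of_eventually_hasDerivAt (hf : ∀ᶠ z in 𝓝 w, HasDerivAt f (f' z) z) :
    AnalyticAt ℂ f w :=
  Complex.analyticAt_iff_eventually_differentiableAt.2 (hf.mono fun _ hz => hz.differentiableAt)

theorem isBigO_sub_quadratic_taylor (hf : ∀ᶠ z in 𝓝 w, HasDerivAt f (f' z) z)
    (hf' : HasDerivAt f' (f'' w) w) :
    (fun z => f z - (f w + f' w * (z - w) + f'' w / 2 * (z - w) ^ 2))
      =O[𝓝 w] fun z => (z - w) ^ 3 := by
  have h1 : iteratedDeriv 1 f w = f' w := by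
    rw [iteratedDeriv_succ_eq_of_eventually_hasDerivAt hf, iteratedDeriv_zero]
  have h2 : iteratedDeriv 2 f w = f'' w := by
    rw [iteratedDeriv_succ_eq_of_eventually_hasDerivAt hf, iteratedDeriv_one, hf'.deriv]
  refine ((analyticAt_of_eventually_hasDerivAt hf).isBigO_sub_taylor 3).congr_left fun z => ?_
  simp only [Finset.sum_range_succ, Finset.sum_range_zero, iteratedDeriv_zero, h1, h2,
    smul_eq_mul]
  norm_num
  ring

theorem isBigO_sub_cubic_taylor (hf : ∀ᶠ z in 𝓝 w, HasDerivAt f (f' z) z)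
    (hf' : ∀ᶠ z in 𝓝 w, HasDerivAt f' (f'' z) z) (hf'' : HasDerivAt f'' (f''' w) w) :
    (fun z => f z - (f w + f' w * (z - w) + f'' w / 2 * (z - w) ^ 2 + f''' w / 6 * (z - w) ^ 3))
      =O[𝓝 w] fun z => (z - w) ^ 4 := by
  have h1 : iteratedDeriv 1 f w = f' w := by
    rw [iteratedDeriv_succ_eq_of_eventually_hasDerivAt hf, iteratedDeriv_zero]
  have h2 : iteratedDeriv 2 f w = f'' w := by
    rw [iteratedDeriv_succ_eq_of_eventually_hasDerivAt hf,
      iteratedDeriv_succ_eq_of_eventually_hasDerivAt hf', iteratedDeriv_zero]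
  have h3 : iteratedDeriv 3 f w = f''' w := by
    rw [iteratedDeriv_succ_eq_of_eventually_hasDerivAt hf,
      iteratedDeriv_succ_eq_of_eventually_hasDerivAt hf', iteratedDeriv_one, hf''.deriv]
  refine ((analyticAt_of_eventually_hasDerivAt hf).isBigO_sub_taylor 4).congr_left fun z => ?_
  simp only [Finset.sum_range_succ, Finset.sum_range_zero, iteratedDeriv_zero, h1, h2, h3,
    smul_eq_mul]
  norm_num
  ring

end ComplexTaylor

section NormedField

variable {𝕜 : Type*} [NormedField 𝕜] {w : 𝕜}

theorem isBigO_sub_pow_pow {k m : ℕ} (h : k ≤ m) :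
    (fun z => (z - w) ^ m) =O[𝓝 w] fun z => (z - w) ^ k := by
  have hbdd : (fun z => (z - w) ^ (m - k)) =O[𝓝 w] fun _ => (1 : 𝕜) :=
    ((continuous_sub_right w).pow (m - k)).continuousAt.isBigO_one 𝕜
  refine (hbdd.mul (isBigO_refl (fun z => (z - w) ^ k) _)).congr (fun z => ?_) fun z => one_mul _
  rw [← pow_add, Nat.sub_add_cancel h]

theorem isLittleO_sub_pow_pow {k m : ℕ} (h : k < m) :
    (fun z => (z - w) ^ m) =o[𝓝 w] fun z => (z - w) ^ k :=
  (isLittleO_pow_pow h).comp_tendsto (tendsto_sub_nhds_zero_iff.2 tendsto_id)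

variable {f g : 𝕜 → 𝕜} {b c : 𝕜}

theorem isBigO_mul_sq_sub_sq_sub_pow_four
    (hf : (fun z => f z - (f w + g w * (z - w) + b * (z - w) ^ 2 + c * (z - w) ^ 3))
      =O[𝓝 w] fun z => (z - w) ^ 4)
    (hg : (fun z => g z - (g w + 2 * b * (z - w) + 3 * c * (z - w) ^ 2))
      =O[𝓝 w] fun z => (z - w) ^ 3) :
    (fun z => g w * g z * (z - w) ^ 2 - (f z - f w) ^ 2 - (g w * c - b ^ 2) * (z - w) ^ 4)
      =O[𝓝 w] fun z => (z - w) ^ 5 := by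
  set a := g w
  set E₁ := fun z => f z - (f w + a * (z - w) + b * (z - w) ^ 2 + c * (z - w) ^ 3)
  set E₂ := fun z => g z - (a + 2 * b * (z - w) + 3 * c * (z - w) ^ 2)
  set P := fun z => a * (z - w) + b * (z - w) ^ 2 + c * (z - w) ^ 3
  have hP : P =O[𝓝 w] fun z => (z - w) ^ 1 :=
    (((isBigO_sub_pow_pow le_rfl).const_mul_left a).add
      ((isBigO_sub_pow_pow (show 1 ≤ 2 by norm_num)).const_mul_left b)).add
      ((isBigO_sub_pow_pow (show 1 ≤ 3 by norm_num)).const_mul_left c)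
      |>.congr_left fun z => by simp only [P, pow_one]
  have hquad : (fun z => (2 * P z + E₁ z) * E₁ z) =O[𝓝 w] fun z => (z - w) ^ 1 * (z - w) ^ 4 :=
    ((hP.const_mul_left 2).add (hf.trans (isBigO_sub_pow_pow (show 1 ≤ 4 by norm_num)))).mul hf
  have hlin : (fun z => a * E₂ z * (z - w) ^ 2) =O[𝓝 w] fun z => (z - w) ^ 3 * (z - w) ^ 2 :=
    (hg.const_mul_left a).mul (isBigO_refl _ _)
  have hpoly : (fun z => -(2 * b * c) * (z - w) ^ 5 - c ^ 2 * (z - w) ^ 6)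
      =O[𝓝 w] fun z => (z - w) ^ 5 :=
    ((isBigO_refl _ _).const_mul_left _).sub
      ((isBigO_sub_pow_pow (show 5 ≤ 6 by norm_num)).const_mul_left _)
  -- `f z - f w = P z + E₁ z` and `g z = a + 2 b (z-w) + 3 c (z-w)² + E₂ z`
  refine ((hlin.congr_right fun z => by ring).add hpoly).sub
    (hquad.congr_right fun z => by ring) |>.congr_left fun z => ?_
  simp only [E₁, E₂, P]
  ring

theorem tendsto_mul_div_sq_sub_inv_sq_of_transformation {F Ft φ φ' : 𝕜 → 𝕜} {c₂ ct₂ : 𝕜}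
    (hexp : (fun z => F z - ((z - w) ^ 2)⁻¹ + 2 * c₂) =O[𝓝[≠] w] fun z => z - w)
    (hexp' : (fun ζ => Ft ζ - ((ζ - φ w) ^ 2)⁻¹ + 2 * ct₂) =O[𝓝[≠] (φ w)] fun ζ => ζ - φ w)
    (htrans : ∀ᶠ z in 𝓝[≠] w, Ft (φ z) * φ' z * φ' w = F z)
    (hφ : Tendsto φ (𝓝[≠] w) (𝓝[≠] (φ w))) (hφ' : ContinuousAt φ' w) :
    Tendsto (fun z => φ' w * φ' z / (φ z - φ w) ^ 2 - ((z - w) ^ 2)⁻¹) (𝓝[≠] w)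
      (𝓝 (2 * ct₂ * φ' w ^ 2 - 2 * c₂)) := by
  have hsub : ∀ v : 𝕜, Tendsto (fun z => z - v) (𝓝[≠] v) (𝓝 0) := fun v =>
    (tendsto_sub_nhds_zero_iff.2 tendsto_id).mono_left nhdsWithin_le_nhds
  have hrem : Tendsto (fun z => F z - ((z - w) ^ 2)⁻¹ + 2 * c₂) (𝓝[≠] w) (𝓝 0) :=
    hexp.trans_tendsto (hsub w)
  have hrem' : Tendsto (fun z => Ft (φ z) - ((φ z - φ w) ^ 2)⁻¹ + 2 * ct₂) (𝓝[≠] w) (𝓝 0) :=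
    (hexp'.trans_tendsto (hsub (φ w))).comp hφ
  have hlim := (hrem.sub_const (2 * c₂)).sub
    ((tendsto_const_nhds (x := φ' w)).mul (hφ'.tendsto.mono_left nhdsWithin_le_nhds)
      |>.mul (hrem'.sub_const (2 * ct₂)))
  rw [show (0 : 𝕜) - 2 * c₂ - φ' w * φ' w * (0 - 2 * ct₂) = 2 * ct₂ * φ' w ^ 2 - 2 * c₂ by ring]
    at hlim
  refine hlim.congr' ?_
  filter_upwards [htrans] with z hz
  rw [← hz]
  ring

end NormedField

section NontriviallyNormedField

variable {𝕜 : Type*} [NontriviallyNormedField 𝕜] {w : 𝕜} {f g : 𝕜 → 𝕜} {b c : 𝕜}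

theorem tendsto_mul_div_sq_sub_inv_sq
    (hf : (fun z => f z - (f w + g w * (z - w) + b * (z - w) ^ 2 + c * (z - w) ^ 3))
      =O[𝓝 w] fun z => (z - w) ^ 4)
    (hg : (fun z => g z - (g w + 2 * b * (z - w) + 3 * c * (z - w) ^ 2))
      =O[𝓝 w] fun z => (z - w) ^ 3) (hgw : g w ≠ 0) :
    Tendsto (fun z => g w * g z / (f z - f w) ^ 2 - ((z - w) ^ 2)⁻¹) (𝓝[≠] w)
      (𝓝 ((g w * c - b ^ 2) / g w ^ 2)) := by
  set L := g w * c - b ^ 2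
  have hderiv : HasDerivAt f (g w) w := by
    rw [hasDerivAt_iff_isLittleO]
    have hquad : (fun z => f z - (f w + g w * (z - w) + b * (z - w) ^ 2 + c * (z - w) ^ 3)
        + b * (z - w) ^ 2 + c * (z - w) ^ 3) =O[𝓝 w] fun z => (z - w) ^ 2 :=
      ((hf.trans (isBigO_sub_pow_pow (show 2 ≤ 4 by norm_num))).add
        ((isBigO_refl _ _).const_mul_left b)).add
        ((isBigO_sub_pow_pow (show 2 ≤ 3 by norm_num)).const_mul_left c)
    refine (hquad.trans_isLittleO ?_).congr (fun z => by simp only [smul_eq_mul]; ring)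
      fun z => pow_one _
    exact isLittleO_sub_pow_pow (show 1 < 2 by norm_num)
  have hslope : Tendsto (fun z => (f z - f w) / (z - w)) (𝓝[≠] w) (𝓝 (g w)) := by
    refine (hasDerivAt_iff_tendsto_slope.1 hderiv).congr fun z => ?_
    rw [slope_def_field]
  have hnum : Tendsto (fun z => (g w * g z * (z - w) ^ 2 - (f z - f w) ^ 2) / (z - w) ^ 4)
      (𝓝[≠] w) (𝓝 L) := by
    have hsmall := ((isBigO_mul_sq_sub_sq_sub_pow_four hf hg).trans_isLittleO
      (isLittleO_sub_pow_pow (show 4 < 5 by norm_num))).tendsto_div_nhds_zero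
    have hL := (hsmall.mono_left (nhdsWithin_le_nhds (s := {w}ᶜ))).add_const L
    rw [zero_add] at hL
    refine hL.congr' ?_
    filter_upwards [self_mem_nhdsWithin] with z hz
    have hz' : z - w ≠ 0 := sub_ne_zero.2 hz
    field_simp
    ring
  rw [div_eq_mul_inv]
  refine (hnum.mul ((hslope.pow 2).inv₀ (pow_ne_zero 2 hgw))).congr' ?_
  filter_upwards [hderiv.eventually_ne hgw, self_mem_nhdsWithin] with z hfz hz
  have hz' : z - w ≠ 0 := sub_ne_zero.2 hz
  have hfz' : f z - f w ≠ 0 := sub_ne_zero.2 hfz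
  field_simp

end NontriviallyNormedField

theorem tendsto_deriv_mul_div_sq_sub_inv_sq {f f' f'' f''' : ℂ → ℂ} {w : ℂ}
    (hf : ∀ᶠ z in 𝓝 w, HasDerivAt f (f' z) z) (hf' : ∀ᶠ z in 𝓝 w, HasDerivAt f' (f'' z) z)
    (hf'' : HasDerivAt f'' (f''' w) w) (hne : f' w ≠ 0) :
    Tendsto (fun z => f' w * f' z / (f z - f w) ^ 2 - ((z - w) ^ 2)⁻¹) (𝓝[≠] w)
      (𝓝 ((1 / 6) * (f''' w / f' w - (3 / 2) * (f'' w / f' w) ^ 2))) := by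
  have h := tendsto_mul_div_sq_sub_inv_sq (b := f'' w / 2) (c := f''' w / 6)
    ((isBigO_sub_cubic_taylor hf hf' hf'').congr_left fun z => by ring)
    ((isBigO_sub_quadratic_taylor hf' hf'').congr_left fun z => by ring) hne
  convert h using 2
  field_simp
  ring

/-- If a double differential has local forms
F(z)dzdw = dzdw/(z-w)² - 2c₂dzdw + O(z-w) and transforms as
F̃(φ(z))·φ'(z)·φ'(w) = F(z), with F̃(z̃) = 1/(z̃-w̃)² - 2·ct₂ + O(z̃-w̃) at w̃ = φ(w),
then 2·ct₂·(φ'(w))² = 2c₂ + (1/6){w̃,w}₂, where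
{w̃,w}₂ = φ'''/φ' - (3/2)(φ''/φ')² at w; i.e. c₂ transforms as a projective
connection. -/
theorem projective_connection_transformation
    (U : Set ℂ) (hU : IsOpen U) (w : ℂ) (hw : w ∈ U)
    (c₂ ct₂ : ℂ) (F Ft φ φ' φ'' φ''' : ℂ → ℂ)
    (hφ : ∀ z ∈ U, HasDerivAt φ (φ' z) z)
    (hφ' : ∀ z ∈ U, HasDerivAt φ' (φ'' z) z)
    (hφ'' : ∀ z ∈ U, HasDerivAt φ'' (φ''' z) z)
    (hne : ∀ z ∈ U, φ' z ≠ 0)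
    (hexp : (fun z => F z - ((z - w) ^ 2)⁻¹ + 2 * c₂) =O[𝓝[≠] w] fun z => z - w)
    (htrans : ∀ z ∈ U, z ≠ w → Ft (φ z) * φ' z * φ' w = F z)
    (hexp' : (fun ζ => Ft ζ - ((ζ - φ w) ^ 2)⁻¹ + 2 * ct₂)
      =O[𝓝[≠] (φ w)] fun ζ => ζ - φ w) :
    2 * ct₂ * (φ' w) ^ 2
      = 2 * c₂ + (1/6) * (φ''' w / φ' w - (3/2) * (φ'' w / φ' w) ^ 2) := by
  have hUw : U ∈ 𝓝 w := hU.mem_nhds hw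
  have hschwarzian := tendsto_deriv_mul_div_sq_sub_inv_sq (eventually_of_mem hUw hφ)
    (eventually_of_mem hUw hφ') (hφ'' w hw) (hne w hw)
  have htrans' : ∀ᶠ z in 𝓝[≠] w, Ft (φ z) * φ' z * φ' w = F z := by
    filter_upwards [mem_nhdsWithin_of_mem_nhds hUw, self_mem_nhdsWithin] with z hz hzw
    exact htrans z hz hzw
  have hlaurent := tendsto_mul_div_sq_sub_inv_sq_of_transformation hexp hexp' htrans'
    ((hφ w hw).tendsto_nhdsNE (hne w hw)) (hφ' w hw).differentiableAt.continuousAt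
  linear_combination tendsto_nhds_unique hlaurent hschwarzian
end
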